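/- With notation as above, the geometric multiplicity of the eigenvalue 1 of γ(1) = exp(J·Q) equals 2, i.e., dim ker(γ(1) - I_{2d}) = 2, for every integer d ≥ 1. -/

import Mathlib

open Matrix

noncomputable def upperShift (d : ℕ) : Matrix (Fin d) (Fin d) ℝ :=
  Matrix.of fun i j => if (j : ℕ) = (i : ℕ) + 1 then 1 else 0

noncomputable def stdJ (d : ℕ) : Matrix (Fin d ⊕ Fin d) (Fin d ⊕ Fin d) ℝ :=
  Matrix.fromBlocks 0 (-1) 1 0

noncomputable def quadQ (d : ℕ) : Matrix (Fin d ⊕ Fin d) (Fin d ⊕ Fin d) ℝ :=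
  Matrix.fromBlocks 0 (upperShift d) (upperShift d)ᵀ 0

/-!
`J Q = diag(-Aᵀ, A)` is nilpotent, so `exp (J Q) - 1 = (1 + J Q / 2! + (J Q)² / 3! + ⋯) * J Q`
with a unipotent, hence invertible, first factor. Thus `ker (γ(1) - 1) = ker (J Q)`, whose
dimension is `dim ker Aᵀ + dim ker A = 2 dim ker A`, and the kernel of the shift `A` is spanned by
the first basis vector.
-/

open Finset LinearMap Module Nat

section NilpotentExp

variable {A : Type*} [Ring A] [Algebra ℚ A] [TopologicalSpace A] [IsTopologicalRing A]

theorem NormedSpace.exp_eq_sum_of_pow_eq_zero {a : A} {k : ℕ} (h : a ^ k = 0) :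
    NormedSpace.exp a = ∑ i ∈ range k, (i ! : ℚ)⁻¹ • a ^ i := by
  rw [NormedSpace.exp_eq_tsum_rat]
  refine tsum_eq_sum fun i hi => ?_
  rw [pow_eq_zero_of_le (by simpa using hi) h, smul_zero]

theorem IsNilpotent.exists_isUnit_exp_sub_one_eq_mul {a : A} (ha : IsNilpotent a) :
    ∃ u : A, IsUnit u ∧ NormedSpace.exp a - 1 = u * a := by
  obtain ⟨k, hk⟩ := ha
  set w := ∑ i ∈ range k, ((i + 2)! : ℚ)⁻¹ • a ^ i
  have hwa : Commute w a :=
    Commute.sum_left _ _ _ fun i _ => ((Commute.refl a).pow_left i).smul_left _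
  refine ⟨1 + w * a, (hwa.isNilpotent_mul_left ⟨k, hk⟩).isUnit_one_add, ?_⟩
  rw [NormedSpace.exp_eq_sum_of_pow_eq_zero (pow_eq_zero_of_le (by omega : k ≤ k + 2) hk),
    sum_range_succ', sum_range_succ']
  simp only [w, add_mul, one_mul, Finset.sum_mul, smul_mul_assoc, ← _root_.pow_succ, factorial_zero,
    factorial_one, cast_one, inv_one, one_smul, pow_zero, pow_one, zero_add]
  abel

end NilpotentExp

theorem Submodule.finrank_prod {K M₁ M₂ : Type*} [DivisionRing K] [AddCommGroup M₁] [Module K M₁]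
    [AddCommGroup M₂] [Module K M₂] (p : Submodule K M₁) (q : Submodule K M₂)
    [FiniteDimensional K p] [FiniteDimensional K q] :
    finrank K (p.prod q) = finrank K p + finrank K q := by
  have h : range (p.subtype.prodMap q.subtype) = p.prod q := by
    rw [range_prodMap, Submodule.range_subtype, Submodule.range_subtype]
  rw [← h, finrank_range_of_inj (p.injective_subtype.prodMap q.injective_subtype),
    Module.finrank_prod]

namespace Matrix

variable {n : Type*} [Fintype n] [DecidableEq n]

theorem ker_toLin'_mul_of_isUnit {R : Type*} [CommRing R] {u : Matrix n n R} (hu : IsUnit u)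
    (M : Matrix n n R) : ker (toLin' (u * M)) = ker (toLin' M) := by
  have hinj : Function.Injective (toLin' u) :=
    ((Module.End.isUnit_iff _).mp (hu.map toLinAlgEquiv')).injective
  rw [toLin'_mul, ker_comp_of_ker_eq_bot _ (ker_eq_bot.mpr hinj)]

theorem ker_toLin'_exp_sub_one {R : Type*} [CommRing R] [Algebra ℚ R] [TopologicalSpace R]
    [IsTopologicalRing R] {M : Matrix n n R} (hM : IsNilpotent M) :
    ker (toLin' (NormedSpace.exp M - 1)) = ker (toLin' M) := by
  obtain ⟨u, hu, h⟩ := hM.exists_isUnit_exp_sub_one_eq_mul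
  rw [h, ker_toLin'_mul_of_isUnit hu]

theorem fromBlocks_zero_zero_pow {m R : Type*} [Fintype m] [DecidableEq m] [Semiring R]
    (A : Matrix m m R) (B : Matrix n n R) (k : ℕ) :
    fromBlocks A 0 0 B ^ k = fromBlocks (A ^ k) 0 0 (B ^ k) := by
  induction k with
  | zero => simp [fromBlocks_one]
  | succ k ih => simp [pow_succ, ih, fromBlocks_multiply]

variable {K : Type*} [Field K]

theorem finrank_ker_toLin'_fromBlocks_zero_zero {m : Type*} [Fintype m] [DecidableEq m]
    (A : Matrix m m K) (B : Matrix n n K) :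
    finrank K (ker (toLin' (fromBlocks A 0 0 B))) =
      finrank K (ker (toLin' A)) + finrank K (ker (toLin' B)) := by
  let e := LinearEquiv.sumArrowLequivProdArrow m n K K
  have h : ker (toLin' (fromBlocks A 0 0 B)) =
      (ker ((toLin' A).prodMap (toLin' B))).comap e.toLinearMap := by
    ext x
    simp only [mem_ker, toLin'_apply, fromBlocks_mulVec, zero_mulVec, add_zero, zero_add,
      funext_iff, Pi.zero_apply, Sum.forall, Sum.elim_inl, Sum.elim_inr, ker_prodMap,
      Submodule.mem_comap, LinearEquiv.coe_coe, Submodule.mem_prod, e]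
    rfl
  rw [h, Submodule.comap_equiv_eq_map_symm, LinearEquiv.finrank_map_eq, ker_prodMap,
    Submodule.finrank_prod]

theorem finrank_ker_toLin'_transpose (A : Matrix n n K) :
    finrank K (ker (toLin' Aᵀ)) = finrank K (ker (toLin' A)) := by
  have hA := finrank_range_add_finrank_ker (toLin' A)
  have hAt := finrank_range_add_finrank_ker (toLin' Aᵀ)
  have hrank := rank_transpose A
  rw [Matrix.rank, Matrix.rank, ← toLin'_apply', ← toLin'_apply'] at hrank
  omega

end Matrix

theorem upperShift_pow_apply (d k : ℕ) (i j : Fin d) :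
    (upperShift d ^ k) i j = if (j : ℕ) = i + k then 1 else 0 := by
  induction k generalizing j with
  | zero => simp [one_apply, Fin.ext_iff, eq_comm]
  | succ k ih =>
    rw [pow_succ, mul_apply]
    simp only [ih]
    simp only [upperShift, of_apply, boole_mul]
    by_cases h : (i : ℕ) + k < d
    · rw [Finset.sum_eq_single ⟨i + k, h⟩ (fun l _ hl => if_neg (by simpa [Fin.ext_iff] using hl))
        (by simp)]
      simp [add_assoc]
    · rw [if_neg (by omega)]
      exact Finset.sum_eq_zero fun l _ => if_neg (by omega)

theorem upperShift_pow_self (d : ℕ) : upperShift d ^ d = 0 := by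
  ext i j
  rw [upperShift_pow_apply, if_neg (by omega), Matrix.zero_apply]

theorem upperShift_mulVec_castSucc {n : ℕ} (x : Fin (n + 1) → ℝ) (i : Fin n) :
    (upperShift (n + 1) *ᵥ x) i.castSucc = x i.succ := by
  rw [mulVec, dotProduct, Finset.sum_eq_single i.succ (fun l _ hl => ?_) (by simp)]
  · simp [upperShift]
  · have : (l : ℕ) ≠ i + 1 := fun h => hl (Fin.ext h)
    simp [upperShift, this]

theorem ker_toLin'_upperShift (n : ℕ) :
    ker (toLin' (upperShift (n + 1))) = Submodule.span ℝ {Pi.single 0 1} := by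
  apply le_antisymm
  · intro x hx
    have hsucc (i : Fin n) : x i.succ = 0 := by
      have := congrFun (mem_ker.mp hx) i.castSucc
      rwa [toLin'_apply, upperShift_mulVec_castSucc] at this
    rw [Submodule.mem_span_singleton]
    refine ⟨x 0, funext fun j => j.cases ?_ fun i => ?_⟩
    · simp
    · simp [hsucc]
  · rw [Submodule.span_le, Set.singleton_subset_iff, SetLike.mem_coe, mem_ker, toLin'_apply,
      mulVec_single_one]
    ext i
    simp [upperShift]

theorem finrank_ker_toLin'_upperShift {d : ℕ} (hd : 1 ≤ d) :
    finrank ℝ (ker (toLin' (upperShift d))) = 1 := by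
  obtain ⟨n, rfl⟩ := Nat.exists_eq_add_of_le' hd
  rw [ker_toLin'_upperShift, finrank_span_singleton (by simp)]

theorem stdJ_mul_quadQ (d : ℕ) :
    stdJ d * quadQ d = fromBlocks (-(upperShift d)ᵀ) 0 0 (upperShift d) := by
  simp [stdJ, quadQ, fromBlocks_multiply]

theorem isNilpotent_stdJ_mul_quadQ (d : ℕ) : IsNilpotent (stdJ d * quadQ d) :=
  ⟨d, by
    rw [stdJ_mul_quadQ, fromBlocks_zero_zero_pow, neg_pow, ← transpose_pow, upperShift_pow_self]
    simp⟩

/-- The geometric multiplicity of the eigenvalue 1 of γ(1) = exp(J·Q) equals 2,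
i.e. dim ker(γ(1) - I) = 2, for every d ≥ 1. -/
theorem stmt2 (d : ℕ) (hd : 1 ≤ d) :
    Module.finrank ℝ
      (LinearMap.ker (Matrix.toLin' (NormedSpace.exp (stdJ d * quadQ d) - 1))) = 2 := by
  rw [ker_toLin'_exp_sub_one (isNilpotent_stdJ_mul_quadQ d), stdJ_mul_quadQ,
    finrank_ker_toLin'_fromBlocks_zero_zero, map_neg, ker_neg, finrank_ker_toLin'_transpose,
    finrank_ker_toLin'_upperShift hd]
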